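/- arXiv:1212.1435 — 4 statements merged into one kernel-verified Lean document; each statement's English description precedes it below -/
import Mathlib

section
/- Let C be a spherical fusion category over ℂ with FSexp(C)=N, let F: Z(C) → C be the forgetful functor from the Drinfeld center, and let θ be the twist of the modular tensor category Z(C). Then for every V ∈ C, ν̄(V) = (N/dim C) · Σ_X [F(X):V]_C · d(X), where the sum runs over those isomorphism classes of simple objects X of Z(C) with θ_X = id_X, [F(X):V]_C = dim Hom_C(F(X), V), and d(X) is the pivotal dimension of X. -/
/-!
Swapping the sum over `i` with the sum over simple objects of `Z(C)`, `ν̄(V)` weights each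
`X` by the geometric sum `Σ_{i=1}^N ω_X^i`. Since `ω_X^N = 1`, this is `N` when `ω_X = 1` and
vanishes otherwise.
-/


open scoped Classical

/-- Abstract Frobenius–Schur indicator data of a spherical fusion category `C` over `ℂ`
together with the structure of its Drinfeld center `Z(C)` needed for the indicator formula of
Ng–Schauenburg: `ZSimple` indexes the isomorphism classes of simple objects `X` of `Z(C)`,
`ωZ X` is the scalar by which the twist `θ` acts on `X` (so `θ_X = ω_X · id_X`, a root of
unity whose order divides `FSexp(C) = ord(θ)`), `dZ X` is the pivotal dimension of `X`,
`mult X V = [F(X) : V]_C = dim Hom_C(F(X), V)` for the forgetful functor `F : Z(C) → C`,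
`dimC` is the global dimension `dim C`, and `ν V n = (1 / dim C) · ptr(θ_{K(V)}^n)
= (1 / dim C) Σ_X [F(X):V] ω_X^n d(X)` is the `n`-th Frobenius–Schur indicator. -/
structure SphericalFusionCenterData where
  /-- the objects of the spherical fusion category `C` -/
  Obj : Type
  /-- the pivotal dimension in `C` -/
  d : Obj → ℂ
  /-- `ν V n` is the `n`-th Frobenius–Schur indicator `ν_n(V)` -/
  ν : Obj → ℕ → ℂ
  /-- the Frobenius–Schur exponent `N = FSexp(C)` -/
  FSexp : ℕ
  FSexp_pos : 0 < FSexp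
  FSexp_spec : ∀ V, ν V FSexp = d V
  FSexp_min : ∀ n, 0 < n → (∀ V, ν V n = d V) → FSexp ≤ n
  /-- the global dimension `dim C` -/
  dimC : ℂ
  dimC_ne_zero : dimC ≠ 0
  /-- the isomorphism classes of simple objects of the Drinfeld center `Z(C)` -/
  ZSimple : Type
  [instFintypeZ : Fintype ZSimple]
  /-- the twist scalars: `θ_X = ωZ X · id_X` on a simple `X ∈ Z(C)` -/
  ωZ : ZSimple → ℂ
  /-- the pivotal dimension of a simple object of `Z(C)` -/
  dZ : ZSimple → ℂ
  /-- `mult X V = [F(X) : V]_C = dim Hom_C(F(X), V)` -/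
  mult : ZSimple → Obj → ℕ
  /-- the twist has order dividing `FSexp(C)` (Ng–Schauenburg: `FSexp(C) = ord θ`) -/
  ωZ_pow_FSexp : ∀ X, ωZ X ^ FSexp = 1
  /-- the Ng–Schauenburg indicator formula
  `ν_n(V) = (1 / dim C) Σ_X [F(X):V]_C ω_X^n d(X)` -/
  ν_formula : ∀ V n, ν V n = dimC⁻¹ * ∑ X : ZSimple, (mult X V : ℂ) * ωZ X ^ n * dZ X

attribute [instance] SphericalFusionCenterData.instFintypeZ

/-- The total Frobenius–Schur indicator `ν̄(V) = Σ_{i=1}^{N} ν_i(V)`, `N = FSexp(C)`. -/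
noncomputable def SphericalFusionCenterData.totalInd (C : SphericalFusionCenterData)
    (V : C.Obj) : ℂ :=
  ∑ i ∈ Finset.Icc 1 C.FSexp, C.ν V i


open Finset

theorem sum_Icc_pow_of_pow_eq_one {R : Type*} [CommRing R] [IsDomain R] {ω : R} {n : ℕ}
    (hω : ω ^ n = 1) : ∑ i ∈ Icc 1 n, ω ^ i = if ω = 1 then (n : R) else 0 := by
  split_ifs with h1
  · simp [h1]
  · have hsum : (∑ i ∈ Ico 1 (n + 1), ω ^ i) * (ω - 1) = 0 := by
      rw [geom_sum_Ico_mul ω (by omega), pow_succ, hω]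
      ring
    rw [← Ico_add_one_right_eq_Icc]
    exact (mul_eq_zero.mp hsum).resolve_right (sub_ne_zero.mpr h1)

namespace SphericalFusionCenterData

theorem totalInd_eq_sum_geomSum (C : SphericalFusionCenterData) (V : C.Obj) :
    C.totalInd V =
      C.dimC⁻¹ * ∑ X, (C.mult X V : ℂ) * (∑ i ∈ Icc 1 C.FSexp, C.ωZ X ^ i) * C.dZ X := by
  simp only [totalInd, ν_formula, mul_sum, sum_mul]
  rw [sum_comm]

end SphericalFusionCenterData

/-- **Proposition 2.3(ii).** Let `C` be a spherical fusion category over `ℂ`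
with `FSexp(C) = N`, `F : Z(C) → C` the forgetful functor and `θ` the twist of `Z(C)`.  Then
for every `V ∈ C`,
`ν̄(V) = (N / dim C) · Σ_{X ∈ Irr(Z(C)), θ_X = id_X} [F(X) : V]_C · d(X)`. -/
theorem totalInd_formula (C : SphericalFusionCenterData) (V : C.Obj) :
    C.totalInd V =
      (C.FSexp : ℂ) / C.dimC *
        ∑ X : C.ZSimple, (if C.ωZ X = 1 then (C.mult X V : ℂ) * C.dZ X else 0) := by
  rw [C.totalInd_eq_sum_geomSum, div_eq_inv_mul, mul_assoc, mul_sum (a := (C.FSexp : ℂ))]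
  congr 1
  refine sum_congr rfl fun X _ => ?_
  rw [sum_Icc_pow_of_pow_eq_one (C.ωZ_pow_FSexp X)]
  split_ifs <;> ring
end

section
/- Let G be an abelian group and (ω,c) an Eilenberg–MacLane 3-cocycle of G with values in ℂ^×. Then the map b: G×G → ℂ^× defined by b(x,y) = c(x,y)·c(y,x) is a bicharacter of G, i.e. b(xy,z) = b(x,z)b(y,z) and b(x,yz) = b(x,y)b(x,z) for all x,y,z ∈ G. -/
/-!
Multiplying the first hexagon identity at `(x, y, z)` with the second one at `(z, x, y)`, both
sides carry the same three values `ω x y z`, `ω x z y`, `ω z x y`; cancelling them leaves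
`b (x y, z) = b (x, z) b (y, z)`. Since `b` is symmetric, multiplicativity in the second variable
follows.
-/

/-- `ω` is a normalized 3-cocycle on `G` with values in `ℂˣ`. -/
def IsNormalized3Cocycle {G : Type*} [CommGroup G] (ω : G → G → G → ℂˣ) : Prop :=
  (∀ x y z w, ω y z w * ω x (y * z) w * ω x y z = ω (x * y) z w * ω x y (z * w)) ∧
  (∀ x y, ω x 1 y = 1)

/-- `(ω, c)` is an Eilenberg–MacLane 3-cocycle of the abelian group `G`. -/
def IsEM3Cocycle {G : Type*} [CommGroup G] (ω : G → G → G → ℂˣ) (c : G → G → ℂˣ) : Prop :=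
  IsNormalized3Cocycle ω ∧
  (∀ x y z, c (x * y) z * ω x z y = c x z * c y z * ω x y z * ω z x y) ∧
  (∀ x y z, c x (y * z) * ω x y z * ω y z x = c x y * c x z * ω y x z)

/-- `b` is a bicharacter of `G`, i.e. multiplicative in each variable. -/
def IsBicharacter {G : Type*} [CommGroup G] (b : G → G → ℂˣ) : Prop :=
  ∀ x y z, b (x * y) z = b x z * b y z ∧ b x (y * z) = b x y * b x z

theorem symm_mul_map_mul_left_of_hexagons {G M : Type*} [CommGroup G] [CommGroup M]
    (ω : G → G → G → M) (c : G → G → M)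
    (hc₁ : ∀ x y z, c (x * y) z * ω x z y = c x z * c y z * ω x y z * ω z x y)
    (hc₂ : ∀ x y z, c x (y * z) * ω x y z * ω y z x = c x y * c x z * ω y x z) (x y z : G) :
    c (x * y) z * c z (x * y) = c x z * c z x * (c y z * c z y) := by
  apply mul_right_cancel (b := ω x y z * ω x z y * ω z x y)
  calc c (x * y) z * c z (x * y) * (ω x y z * ω x z y * ω z x y)
      = c (x * y) z * ω x z y * (c z (x * y) * ω z x y * ω x y z) := by ac_rfl
    _ = c x z * c y z * ω x y z * ω z x y * (c z x * c z y * ω x z y) := by rw [hc₁, hc₂]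
    _ = c x z * c z x * (c y z * c z y) * (ω x y z * ω x z y * ω z x y) := by ac_rfl

theorem isBicharacter_of_symm_of_map_mul_left {G : Type*} [CommGroup G] {b : G → G → ℂˣ}
    (hsymm : ∀ x y, b x y = b y x) (hmul : ∀ x y z, b (x * y) z = b x z * b y z) :
    IsBicharacter b := fun x y z =>
  ⟨hmul x y z, by rw [hsymm, hmul, hsymm y, hsymm z]⟩

/-- If `(ω, c)` is an Eilenberg–MacLane 3-cocycle of an abelian group `G`
with values in `ℂˣ`, then `b (x, y) = c (x, y) · c (y, x)` is a bicharacter of `G`. -/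
theorem bicharacter_of_EM3Cocycle
    {G : Type*} [CommGroup G]
    (ω : G → G → G → ℂˣ) (c : G → G → ℂˣ) (hEM : IsEM3Cocycle ω c) :
    IsBicharacter (fun x y => c x y * c y x) := by
  obtain ⟨-, hc₁, hc₂⟩ := hEM
  exact isBicharacter_of_symm_of_map_mul_left (fun _ _ => mul_comm _ _)
    (symm_mul_map_mul_left_of_hexagons ω c hc₁ hc₂)
end

section
/- Let G be an abelian group and (ω,c) an Eilenberg–MacLane 3-cocycle of G with values in ℂ^×. Then the trace t(x) = c(x,x) is a quadratic function on G: t(x^a) = t(x)^{a²} for all x ∈ G and a ∈ ℤ, and the map b_t(x,y) = t(xy)/(t(x)t(y)) is a bicharacter of G. -/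
/-!
The trace of an Eilenberg–MacLane 3-cocycle satisfies `t (x y) = t x · t y · c(x,y) c(y,x)`:
the second hexagon at `(xy, x, y)`, rewritten by the first hexagon at `(x, y, x)` and `(x, y, y)`,
leaves a quotient of associators that the cocycle identity at `(x, y, x, y)` shows to be trivial.
The double braiding `c(x,y) c(y,x)` is a bicharacter, because multiplying the two hexagon
identities makes all associators cancel. Any `t` whose polarization is a bicharacter `b` with
`b x x = t x ^ 2` is quadratic, by induction on the exponent.
-/

theorem map_zpow_eq_pow_sq {G M : Type*} [Group G] [CommGroup M] {t : G → M} {b : G → G → M}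
    (hb : ∀ x y z, b (x * y) z = b x z * b y z) (ht : ∀ x y, t (x * y) = t x * t y * b x y)
    (hdiag : ∀ x, b x x = t x ^ 2) (x : G) (a : ℤ) : t (x ^ a) = t x ^ (a ^ 2) := by
  have hb_one : b 1 1 = 1 := by simpa using hb 1 1 1
  have ht_one : t 1 = 1 := by simpa [hb_one] using ht 1 1
  have hstep (a : ℤ) : t (x ^ (a + 1)) = t (x ^ a) * t x ^ (2 * a + 1) := by
    have hpow : b (x ^ a) x = b x x ^ a := map_zpow (MonoidHom.mk' (b · x) fun y z => hb y z x) x a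
    rw [zpow_add_one, ht, hpow, hdiag]
    group
  induction a using Int.induction_on with
  | zero => simp [ht_one]
  | succ n ih => rw [hstep, ih]; group
  | pred n ih =>
    have h := hstep (-n - 1)
    rw [sub_add_cancel, ih] at h
    rw [eq_mul_inv_of_mul_eq h.symm]
    group

def doubleBraiding {G M : Type*} [Mul M] (c : G → G → M) (x y : G) : M := c x y * c y x

theorem doubleBraiding_comm {G M : Type*} [CommMagma M] (c : G → G → M) (x y : G) :
    doubleBraiding c x y = doubleBraiding c y x :=
  mul_comm _ _

namespace IsEM3Cocycle

variable {G : Type*} [CommGroup G] {ω : G → G → G → ℂˣ} {c : G → G → ℂˣ}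

theorem doubleBraiding_mul_left (h : IsEM3Cocycle ω c) (x y z : G) :
    doubleBraiding c (x * y) z = doubleBraiding c x z * doubleBraiding c y z := by
  obtain ⟨-, hl, hr⟩ := h
  refine mul_right_cancel (b := ω x z y * ω z x y * ω x y z) ?_
  calc doubleBraiding c (x * y) z * (ω x z y * ω z x y * ω x y z)
      = c (x * y) z * ω x z y * (c z (x * y) * ω z x y * ω x y z) := by
        simp only [doubleBraiding]; ac_rfl
    _ = c x z * c y z * ω x y z * ω z x y * (c z x * c z y * ω x z y) := by rw [hl, hr]
    _ = doubleBraiding c x z * doubleBraiding c y z * (ω x z y * ω z x y * ω x y z) := by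
        simp only [doubleBraiding]; ac_rfl

theorem isBicharacter_doubleBraiding (h : IsEM3Cocycle ω c) : IsBicharacter (doubleBraiding c) :=
  fun x y z => ⟨h.doubleBraiding_mul_left x y z, by
    simp only [doubleBraiding_comm c x]; exact h.doubleBraiding_mul_left y z x⟩

theorem trace_mul (h : IsEM3Cocycle ω c) (x y : G) :
    c (x * y) (x * y) = c x x * c y y * doubleBraiding c x y := by
  obtain ⟨⟨hω, -⟩, hl, hr⟩ := h
  have hx : c (x * y) x = c x x * c y x * ω x y x := mul_right_cancel (hl x y x)
  have hy : c (x * y) y = c x y * c y y * ω y x y :=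
    mul_right_cancel <| (hl x y y).trans (mul_right_comm _ _ _)
  refine mul_right_cancel (b := ω (x * y) x y * ω x y (x * y)) ?_
  rw [← mul_assoc, hr, hx, hy, ← hω, mul_comm y x]
  simp only [doubleBraiding]
  ac_rfl

end IsEM3Cocycle

/-- If `(ω, c)` is an Eilenberg–MacLane 3-cocycle of an abelian group `G`,
then the trace `t x = c x x` is a quadratic function on `G`: `t (x ^ a) = t (x) ^ (a²)`
for every integer `a`, and `b_t (x, y) = t (x y) / (t x · t y)` is a bicharacter of `G`. -/
theorem trace_of_EM3Cocycle_is_quadratic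
    {G : Type*} [CommGroup G]
    (ω : G → G → G → ℂˣ) (c : G → G → ℂˣ) (hEM : IsEM3Cocycle ω c) :
    (∀ (x : G) (a : ℤ), c (x ^ a) (x ^ a) = (c x x) ^ (a ^ 2)) ∧
    IsBicharacter (fun x y => c (x * y) (x * y) * (c x x)⁻¹ * (c y y)⁻¹) := by
  have hpolar : (fun x y => c (x * y) (x * y) * (c x x)⁻¹ * (c y y)⁻¹) = doubleBraiding c := by
    funext x y
    rw [hEM.trace_mul, mul_inv_eq_iff_eq_mul, mul_inv_eq_iff_eq_mul]
    ac_rfl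
  refine ⟨map_zpow_eq_pow_sq (fun x y z => (hEM.isBicharacter_doubleBraiding x y z).1)
    hEM.trace_mul (fun x => (sq (c x x)).symm), ?_⟩
  rw [hpolar]
  exact hEM.isBicharacter_doubleBraiding
end

section
/- Let V = 𝔽₂^{2ℓ}, B a non-degenerate symmetric bilinear form on V, τ a square root of |V|⁻¹ = 2^{-2ℓ}, and C = TY(V, χ_B, τ) the Tambara–Yamagami category with its canonical spherical structure. (i) If B is not alternating, then FSexp(C) = 8 and ν̄(m) = 2·sgn(τ) + 2^ℓ. (ii) If B is alternating, then FSexp(C) = 4 and ν̄(m) = sgn(τ) + 2^ℓ. Consequently, ν̄(m) = 0 if and only if B is not alternating, ℓ = 1, and sgn(τ) = −1. -/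
open scoped Classical

/-- Objects of the Tambara–Yamagami category `TY(V, χ_B, τ)`: the invertible objects
`a ∈ V` together with the non-invertible simple object `m`. -/
abbrev TYObj (V : Type) : Type := V ⊕ Unit

/-- The pivotal dimensions in `TY(V, χ_B, τ)` for `V` of order `2^(2ℓ)`:
`d(a) = 1` for `a ∈ V` and `d(m) = √|V| = 2^ℓ`. -/
noncomputable def dTY2 (ℓ : ℕ) : TYObj (Fin (2 * ℓ) → ZMod 2) → ℂ :=
  Sum.elim (fun _ => (1 : ℂ)) (fun _ => (2 : ℂ) ^ ℓ)

/-!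
Since `2n • a = 0` in characteristic 2 and `ν_n(m) = 0` for odd `n`, the exponent is twice the
least `k > 0` with `ν_{2k}(m) = 2^ℓ`, and `ν̄(m)` is the sum of the even-degree indicators.
Writing `w = i^k`, Shimizu's non-alternating value collapses to `sgn(τ)^k ((w + 2 + w⁻¹)/2)^ℓ`,
which is `sgn(τ)^k`, `0` or `2^ℓ` according as `k` is odd, `2 mod 4` or `0 mod 4`. So the
degrees `2, 4, 6, 8` give `sgn(τ), 0, sgn(τ), 2^ℓ` in the non-alternating case, while the
alternating case gives `sgn(τ), 2^ℓ` in degrees `2, 4`; since `2^ℓ ≠ ±1`, the exponents are `8`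
and `4`, and the vanishing criterion is elementary arithmetic.
-/

open Complex

lemma one_add_I_div_sqrt_two_sq : ((1 + I) / (Real.sqrt 2 : ℂ)) ^ 2 = I := by
  rw [div_pow, ← ofReal_pow, Real.sq_sqrt zero_le_two]
  push_cast
  linear_combination (1 / 2 : ℂ) * I_sq

lemma div_sqrt_two_pow_two_mul (x : ℂ) (ℓ : ℕ) :
    (x / (Real.sqrt 2 : ℂ)) ^ (2 * ℓ) = (x ^ 2 / 2) ^ ℓ := by
  rw [pow_mul, div_pow, ← ofReal_pow, Real.sq_sqrt zero_le_two]
  push_cast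
  rfl

/-- Shimizu's value of `ν_{2k}(m)` for a non-alternating form on `𝔽₂^(2ℓ)`, with `ε = sgn(τ)`. -/
noncomputable def shimizuValue (ε : ℂ) (ℓ k : ℕ) : ℂ :=
  ε ^ k * ((1 + I) / (Real.sqrt 2 : ℂ)) ^ (2 * ℓ * k) *
    ((1 + I ^ (-(k : ℤ))) / (Real.sqrt 2 : ℂ)) ^ (2 * ℓ)

lemma shimizuValue_eq (ε : ℂ) (ℓ k : ℕ) :
    shimizuValue ε ℓ k = ε ^ k * (I ^ k * (1 + (I ^ k)⁻¹) ^ 2 / 2) ^ ℓ := by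
  rw [shimizuValue, zpow_neg, zpow_natCast, div_sqrt_two_pow_two_mul,
    show 2 * ℓ * k = 2 * k * ℓ by ring, pow_mul, pow_mul, one_add_I_div_sqrt_two_sq,
    mul_assoc, ← mul_pow, mul_div_assoc]

lemma shimizuValue_of_odd (ε : ℂ) (ℓ : ℕ) {k : ℕ} (hk : Odd k) :
    shimizuValue ε ℓ k = ε ^ k := by
  have hw : (I ^ k) ^ 2 = -1 := by rw [← pow_mul, mul_comm, pow_mul, I_sq, hk.neg_one_pow]
  have hw0 : I ^ k ≠ 0 := pow_ne_zero _ I_ne_zero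
  have hbase : I ^ k * (1 + (I ^ k)⁻¹) ^ 2 / 2 = 1 := by
    field_simp
    linear_combination hw
  rw [shimizuValue_eq, hbase, one_pow, mul_one]

lemma shimizuValue_of_four_dvd (ε : ℂ) (ℓ : ℕ) {k : ℕ} (hk : 4 ∣ k) :
    shimizuValue ε ℓ k = ε ^ k * 2 ^ ℓ := by
  have hI : I ^ k = 1 := by
    obtain ⟨j, rfl⟩ := hk
    rw [pow_mul, I_pow_four, one_pow]
  rw [shimizuValue_eq, hI]
  norm_num

lemma shimizuValue_of_mod_four_eq_two (ε : ℂ) {ℓ : ℕ} (hℓ : 0 < ℓ) {k : ℕ} (hk : k % 4 = 2) :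
    shimizuValue ε ℓ k = 0 := by
  have hI : I ^ k = -1 := by
    rw [← Nat.div_add_mod k 4, hk, pow_add, pow_mul, I_pow_four, one_pow, one_mul, I_sq]
  rw [shimizuValue_eq, hI]
  norm_num [hℓ.ne']

section OddVanishing

variable {M : Type*} {f : ℕ → M}

lemma isLeast_two_mul_of_odd_eq_zero [Zero M] {d : M} (hd : d ≠ 0)
    (hodd : ∀ n, Odd n → f n = 0) {K : ℕ} (hK : IsLeast {k | 0 < k ∧ f (2 * k) = d} K) :
    IsLeast {n | 0 < n ∧ f n = d} (2 * K) := by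
  refine ⟨⟨by have := hK.1.1; omega, hK.1.2⟩, ?_⟩
  rintro n ⟨hn, hfn⟩
  obtain ⟨k, rfl⟩ :=
    (Nat.not_odd_iff_even.mp fun h => hd (hfn.symm.trans (hodd n h))).two_dvd
  have := hK.2 ⟨by omega, hfn⟩
  omega

lemma sum_Icc_two_mul_of_odd_eq_zero [AddCommMonoid M] (hodd : ∀ n, Odd n → f n = 0) (K : ℕ) :
    ∑ i ∈ Finset.Icc 1 (2 * K), f i = ∑ k ∈ Finset.Icc 1 K, f (2 * k) := by
  induction K with
  | zero => simp
  | succ K ih =>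
    rw [Finset.sum_Icc_succ_top (by omega), ← ih, show 2 * (K + 1) = 2 * K + 1 + 1 by ring,
      Finset.sum_Icc_succ_top (by omega), Finset.sum_Icc_succ_top (by omega),
      hodd _ (odd_two_mul_add_one K), add_zero]

end OddVanishing

section IndicatorSequence

variable {f : ℕ → ℂ} {ε : ℂ} {ℓ N : ℕ}

lemma eq_eight_and_sum_Icc_of_shimizuValue (hℓ : 0 < ℓ) (hε : ε ^ 2 = 1) (hεd : ε ≠ 2 ^ ℓ)
    (hodd : ∀ n, Odd n → f n = 0) (hf : ∀ k, 0 < k → f (2 * k) = shimizuValue ε ℓ k)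
    (hN : IsLeast {n | 0 < n ∧ f n = 2 ^ ℓ} N) :
    N = 8 ∧ ∑ i ∈ Finset.Icc 1 N, f i = 2 * ε + 2 ^ ℓ := by
  have h1 : f (2 * 1) = ε := by rw [hf 1 one_pos, shimizuValue_of_odd ε ℓ odd_one, pow_one]
  have h2 : f (2 * 2) = 0 := by rw [hf 2 two_pos, shimizuValue_of_mod_four_eq_two ε hℓ rfl]
  have h3 : f (2 * 3) = ε := by
    rw [hf 3 three_pos, shimizuValue_of_odd ε ℓ (by decide), pow_succ, hε, one_mul]
  have h4 : f (2 * 4) = 2 ^ ℓ := by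
    rw [hf 4 four_pos, shimizuValue_of_four_dvd ε ℓ dvd_rfl, pow_mul ε 2 2, hε, one_pow, one_mul]
  have hK : IsLeast {k | 0 < k ∧ f (2 * k) = 2 ^ ℓ} 4 := by
    refine ⟨⟨four_pos, h4⟩, fun k ⟨hk, hfk⟩ => ?_⟩
    by_contra! hlt
    interval_cases k
    · exact hεd (h1.symm.trans hfk)
    · exact pow_ne_zero ℓ two_ne_zero (hfk.symm.trans h2)
    · exact hεd (h3.symm.trans hfk)
  have hN8 : N = 2 * 4 :=
    hN.unique (isLeast_two_mul_of_odd_eq_zero (pow_ne_zero ℓ two_ne_zero) hodd hK)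
  refine ⟨hN8, ?_⟩
  rw [hN8, sum_Icc_two_mul_of_odd_eq_zero hodd]
  simp [Finset.sum_Icc_succ_top, h1, h2, h3, h4]
  ring

lemma eq_four_and_sum_Icc_of_alternating (hεd : ε ≠ 2 ^ ℓ) (hodd : ∀ n, Odd n → f n = 0)
    (hf : ∀ k, 0 < k → f (2 * k) = if Odd k then ε else 2 ^ ℓ)
    (hN : IsLeast {n | 0 < n ∧ f n = 2 ^ ℓ} N) :
    N = 4 ∧ ∑ i ∈ Finset.Icc 1 N, f i = ε + 2 ^ ℓ := by
  have h1 : f (2 * 1) = ε := by rw [hf 1 one_pos, if_pos odd_one]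
  have h2 : f (2 * 2) = 2 ^ ℓ := by rw [hf 2 two_pos, if_neg (by decide)]
  have hK : IsLeast {k | 0 < k ∧ f (2 * k) = 2 ^ ℓ} 2 := by
    refine ⟨⟨two_pos, h2⟩, fun k ⟨hk, hfk⟩ => ?_⟩
    by_contra! hlt
    interval_cases k
    exact hεd (h1.symm.trans hfk)
  have hN4 : N = 2 * 2 :=
    hN.unique (isLeast_two_mul_of_odd_eq_zero (pow_ne_zero ℓ two_ne_zero) hodd hK)
  refine ⟨hN4, ?_⟩
  rw [hN4, sum_Icc_two_mul_of_odd_eq_zero hodd]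
  simp [Finset.sum_Icc_succ_top, h1, h2]

end IndicatorSequence

lemma sign_sq (τ : ℝ) : (if 0 < τ then (1 : ℂ) else -1) ^ 2 = 1 := by
  split_ifs <;> norm_num

lemma two_pow_ne_sign {ℓ : ℕ} (hℓ : 0 < ℓ) (τ : ℝ) :
    (2 : ℂ) ^ ℓ ≠ if 0 < τ then 1 else -1 := by
  have : 1 < 2 ^ ℓ := Nat.one_lt_two_pow hℓ.ne'
  split_ifs <;> norm_cast
  omega

lemma sign_add_two_pow_ne_zero {ℓ : ℕ} (hℓ : 0 < ℓ) (τ : ℝ) :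
    (if 0 < τ then (1 : ℂ) else -1) + 2 ^ ℓ ≠ 0 := by
  have : 1 < 2 ^ ℓ := Nat.one_lt_two_pow hℓ.ne'
  split_ifs <;> norm_cast <;> omega

lemma two_mul_sign_add_two_pow_eq_zero_iff {τ : ℝ} (hτ : τ ≠ 0) (ℓ : ℕ) :
    2 * (if 0 < τ then (1 : ℂ) else -1) + 2 ^ ℓ = 0 ↔ ℓ = 1 ∧ τ < 0 := by
  split_ifs with h
  · simp only [h.not_gt, and_false, iff_false]
    norm_cast
    positivity
  · simp only [lt_of_le_of_ne (not_lt.mp h) hτ, and_true]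
    rw [mul_neg_one, neg_add_eq_zero, eq_comm]
    norm_cast
    exact Nat.pow_eq_self_iff one_lt_two

lemma forall_indicator_eq_dTY2_iff {ℓ : ℕ} {ν : TYObj (Fin (2 * ℓ) → ZMod 2) → ℕ → ℂ}
    (hνa : ∀ a n, ν (Sum.inl a) n = if n • a = 0 then (1 : ℂ) else 0)
    (hνodd : ∀ n, Odd n → ν (Sum.inr ()) n = 0) (n : ℕ) :
    (∀ s, ν s n = dTY2 ℓ s) ↔ ν (Sum.inr ()) n = 2 ^ ℓ := by
  refine ⟨fun h => h (Sum.inr ()), fun hm => ?_⟩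
  obtain ⟨k, rfl⟩ : Even n := Nat.not_odd_iff_even.mp fun h =>
    pow_ne_zero ℓ two_ne_zero (hm.symm.trans (hνodd n h))
  rintro (a | ⟨⟩)
  · rw [hνa, if_pos (by rw [add_nsmul, ZModModule.add_self])]
    rfl
  · exact hm

theorem TY_char2_FSexp_and_totalInd_general
    (ℓ : ℕ) (hℓ : 0 < ℓ)
    (B : (Fin (2 * ℓ) → ZMod 2) →ₗ[ZMod 2] (Fin (2 * ℓ) → ZMod 2) →ₗ[ZMod 2] ZMod 2)
    (τ : ℝ) (hτ : τ ^ 2 = ((2 : ℝ) ^ (2 * ℓ))⁻¹)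
    (ν : TYObj (Fin (2 * ℓ) → ZMod 2) → ℕ → ℂ)
    -- the indicators of the invertible objects: `ν_n(a) = δ_{na,0}`
    (hνa : ∀ a n, ν (Sum.inl a) n = if n • a = 0 then (1 : ℂ) else 0)
    -- Shimizu's formulas for the indicators of `m`:
    (hνodd : ∀ n, Odd n → ν (Sum.inr ()) n = 0)
    (hν_not_alt : ¬ (∀ v, B v v = 0) → ∀ k, 0 < k →
      ν (Sum.inr ()) (2 * k) =
        (if 0 < τ then (1 : ℂ) else -1) ^ k *
          ((1 + Complex.I) / (Real.sqrt 2 : ℂ)) ^ (2 * ℓ * k) *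
          ((1 + Complex.I ^ (-(k : ℤ))) / (Real.sqrt 2 : ℂ)) ^ (2 * ℓ))
    (hν_alt : (∀ v, B v v = 0) → ∀ k, 0 < k →
      ν (Sum.inr ()) (2 * k) =
        if Odd k then (if 0 < τ then (1 : ℂ) else -1) else (2 : ℂ) ^ ℓ)
    -- `N = FSexp(C)`:
    (N : ℕ) (hN : 0 < N)
    (hNspec : ∀ s, ν s N = dTY2 ℓ s)
    (hNmin : ∀ n, 0 < n → (∀ s, ν s n = dTY2 ℓ s) → N ≤ n) :
    (¬ (∀ v, B v v = 0) →
        N = 8 ∧ (∑ i ∈ Finset.Icc 1 N, ν (Sum.inr ()) i) =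
          2 * (if 0 < τ then (1 : ℂ) else -1) + 2 ^ ℓ) ∧
    ((∀ v, B v v = 0) →
        N = 4 ∧ (∑ i ∈ Finset.Icc 1 N, ν (Sum.inr ()) i) =
          (if 0 < τ then (1 : ℂ) else -1) + 2 ^ ℓ) ∧
    ((∑ i ∈ Finset.Icc 1 N, ν (Sum.inr ()) i) = 0 ↔
        ¬ (∀ v, B v v = 0) ∧ ℓ = 1 ∧ τ < 0) := by
  have hτ0 : τ ≠ 0 := by
    rintro rfl
    norm_num at hτ
    exact pow_ne_zero _ two_ne_zero hτ.symm
  have hNleast : IsLeast {n | 0 < n ∧ ν (Sum.inr ()) n = 2 ^ ℓ} N := by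
    simp only [← forall_indicator_eq_dTY2_iff hνa hνodd]
    exact ⟨⟨hN, hNspec⟩, fun n hn => hNmin n hn.1 hn.2⟩
  have hnonalt (hB : ¬ ∀ v, B v v = 0) :=
    eq_eight_and_sum_Icc_of_shimizuValue hℓ (sign_sq τ) (two_pow_ne_sign hℓ τ).symm hνodd
      (hν_not_alt hB) hNleast
  have halt (hB : ∀ v, B v v = 0) :=
    eq_four_and_sum_Icc_of_alternating (two_pow_ne_sign hℓ τ).symm hνodd (hν_alt hB) hNleast
  refine ⟨hnonalt, halt, ?_⟩
  by_cases hB : ∀ v, B v v = 0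
  · rw [(halt hB).2]
    exact iff_of_false (sign_add_two_pow_ne_zero hℓ τ) fun h => h.1 hB
  · rw [(hnonalt hB).2, two_mul_sign_add_two_pow_eq_zero_iff hτ0]
    simp only [hB, not_false_eq_true, true_and]

/-- **Proposition 5.6.** Let `V = 𝔽₂^(2ℓ)`, `B` a non-degenerate symmetric
bilinear form on `V`, `τ` a square root of `|V|⁻¹ = 2^(-2ℓ)`, and `C = TY(V, χ_B, τ)` the
Tambara–Yamagami category with its canonical spherical structure, whose Frobenius–Schur
indicators are given by `ν_n(a) = δ_{na,0}` for `a ∈ V` and by Shimizu's formulas for `m`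
(recorded as hypotheses below, `sgn(τ)` being the sign of `τ`), and let `N = FSexp(C)` be
the least positive integer with `ν_N(s) = d(s)` for all simple objects `s`.  Then:
(i) if `B` is not alternating, `FSexp(C) = 8` and `ν̄(m) = 2·sgn(τ) + 2^ℓ`;
(ii) if `B` is alternating, `FSexp(C) = 4` and `ν̄(m) = sgn(τ) + 2^ℓ`.
Consequently `ν̄(m) = 0` iff `B` is not alternating, `ℓ = 1` and `sgn(τ) = -1`. -/
theorem TY_char2_FSexp_and_totalInd
    (ℓ : ℕ) (hℓ : 0 < ℓ)
    (B : (Fin (2 * ℓ) → ZMod 2) →ₗ[ZMod 2] (Fin (2 * ℓ) → ZMod 2) →ₗ[ZMod 2] ZMod 2)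
    (hBsymm : ∀ v w, B v w = B w v)
    (hBnondeg : ∀ v, (∀ w, B v w = 0) → v = 0)
    (τ : ℝ) (hτ : τ ^ 2 = ((2 : ℝ) ^ (2 * ℓ))⁻¹)
    (ν : TYObj (Fin (2 * ℓ) → ZMod 2) → ℕ → ℂ)
    -- the indicators of the invertible objects: `ν_n(a) = δ_{na,0}`
    (hνa : ∀ a n, ν (Sum.inl a) n = if n • a = 0 then (1 : ℂ) else 0)
    -- Shimizu's formulas for the indicators of `m`:
    (hνodd : ∀ n, Odd n → ν (Sum.inr ()) n = 0)
    (hν_not_alt : ¬ (∀ v, B v v = 0) → ∀ k, 0 < k →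
      ν (Sum.inr ()) (2 * k) =
        (if 0 < τ then (1 : ℂ) else -1) ^ k *
          ((1 + Complex.I) / (Real.sqrt 2 : ℂ)) ^ (2 * ℓ * k) *
          ((1 + Complex.I ^ (-(k : ℤ))) / (Real.sqrt 2 : ℂ)) ^ (2 * ℓ))
    (hν_alt : (∀ v, B v v = 0) → ∀ k, 0 < k →
      ν (Sum.inr ()) (2 * k) =
        if Odd k then (if 0 < τ then (1 : ℂ) else -1) else (2 : ℂ) ^ ℓ)
    -- `N = FSexp(C)`:
    (N : ℕ) (hN : 0 < N)
    (hNspec : ∀ s, ν s N = dTY2 ℓ s)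
    (hNmin : ∀ n, 0 < n → (∀ s, ν s n = dTY2 ℓ s) → N ≤ n) :
    (¬ (∀ v, B v v = 0) →
        N = 8 ∧ (∑ i ∈ Finset.Icc 1 N, ν (Sum.inr ()) i) =
          2 * (if 0 < τ then (1 : ℂ) else -1) + 2 ^ ℓ) ∧
    ((∀ v, B v v = 0) →
        N = 4 ∧ (∑ i ∈ Finset.Icc 1 N, ν (Sum.inr ()) i) =
          (if 0 < τ then (1 : ℂ) else -1) + 2 ^ ℓ) ∧
    ((∑ i ∈ Finset.Icc 1 N, ν (Sum.inr ()) i) = 0 ↔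
        ¬ (∀ v, B v v = 0) ∧ ℓ = 1 ∧ τ < 0) :=
  TY_char2_FSexp_and_totalInd_general ℓ hℓ B τ hτ ν hνa hνodd hν_not_alt hν_alt N hN hNspec hNmin
end
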